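/- Let a, b ∈ K∖F. The nonassociative cyclic algebras (K/F,σ,a) and (K/F,σ,b) are isomorphic as F-algebras if and only if there exist j ∈ {0,…,m−1} and k ∈ K^× such that σ^j(a) = N_{K/F}(k)·b. -/

import Mathlib

open Finset

/-- The unit element `t^0` of the nonassociative cyclic algebra, in coordinates. -/
def cycOne (K : Type*) [Zero K] [One K] (m : ℕ) : Fin m → K :=
  fun k => if (k : ℕ) = 0 then 1 else 0

/-- The embedding `x ↦ x t^0` of `K` into the nonassociative cyclic algebra. -/
def cycEmb (K : Type*) [Zero K] (m : ℕ) (x : K) : Fin m → K :=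
  fun i => if (i : ℕ) = 0 then x else 0

section

variable {F K : Type*} [Field F] [Field K] [Algebra F K]

/-- Coordinates of the product in the nonassociative cyclic algebra `(K/F, σ, a)`:
`(x t^i) ∘ (y t^j) = x σ^i(y) t^{i+j}` if `i+j < m` and
`(x t^i) ∘ (y t^j) = x σ^i(y) σ^{i+j-m}(a) t^{i+j-m}` if `i+j ≥ m`. -/
def cycMul (m : ℕ) (σ : K ≃ₐ[F] K) (a : K) (u v : Fin m → K) : Fin m → K :=
  fun k =>
    (∑ i : Fin m, ∑ j : Fin m,
        if (i : ℕ) + (j : ℕ) = (k : ℕ) then u i * (σ ^ (i : ℕ)) (v j) else 0) +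
      ∑ i : Fin m, ∑ j : Fin m,
        if (i : ℕ) + (j : ℕ) = (k : ℕ) + m then
          u i * (σ ^ (i : ℕ)) (v j) * (σ ^ (k : ℕ)) a
        else 0

/-- The field norm `N_{K/F}(k) = ∏_{l=0}^{m-1} σ^l(k)`. -/
def cycNorm (m : ℕ) (σ : K ≃ₐ[F] K) (k : K) : K :=
  ∏ l ∈ Finset.range m, (σ ^ l) k

/-- The map `H_{τ,k} : x t^i ↦ τ(x) (∏_{l=0}^{i-1} σ^l(k)) t^i`. -/
def cycH (m : ℕ) (σ τ : K ≃ₐ[F] K) (k : K) (u : Fin m → K) : Fin m → K :=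
  fun i => τ (u i) * ∏ l ∈ Finset.range (i : ℕ), (σ ^ l) k

/-- The map `G_c : x t^i ↦ x c⁻¹ σ^i(c) t^i`. -/
def cycG (m : ℕ) (σ : K ≃ₐ[F] K) (c : K) (u : Fin m → K) : Fin m → K :=
  fun i => u i * c⁻¹ * (σ ^ (i : ℕ)) c

/-- `H` is an `F`-automorphism of the nonassociative cyclic algebra `(K/F, σ, a)`. -/
def IsCycAut (m : ℕ) (σ : K ≃ₐ[F] K) (a : K) (H : (Fin m → K) → (Fin m → K)) : Prop :=
  Function.Bijective H ∧
    (∀ u v, H (u + v) = H u + H v) ∧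
    (∀ (c : F) (u : Fin m → K), H (c • u) = c • H u) ∧
    H (cycOne K m) = cycOne K m ∧
    ∀ u v, H (cycMul m σ a u v) = cycMul m σ a (H u) (H v)

/-- `H` is an inner `F`-automorphism of `(K/F, σ, a)`:
`H(z) = (w_l ∘ z) ∘ w` for some `w ≠ 0` with left inverse `w_l`. -/
def IsCycInner (m : ℕ) (σ : K ≃ₐ[F] K) (a : K) (H : (Fin m → K) → (Fin m → K)) : Prop :=
  ∃ w wl : Fin m → K, w ≠ 0 ∧ cycMul m σ a wl w = cycOne K m ∧
    ∀ z, H z = cycMul m σ a (cycMul m σ a wl z) w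

end

section

variable {F K : Type*} [Field F] [Field K] [Algebra F K]

/-- `φ` is an isomorphism of `F`-algebras from `(K/F,σ,a)` to `(K/F,σ,b)`. -/
def IsCycIso (m : ℕ) (σ : K ≃ₐ[F] K) (a b : K) (φ : (Fin m → K) → (Fin m → K)) : Prop :=
  Function.Bijective φ ∧
    (∀ u v, φ (u + v) = φ u + φ v) ∧
    (∀ (c : F) (u : Fin m → K), φ (c • u) = c • φ u) ∧
    φ (cycOne K m) = cycOne K m ∧
    ∀ u v, φ (cycMul m σ a u v) = cycMul m σ b (φ u) (φ v)

end

/-! The subfield `K = K t⁰` lies in the left nucleus of `(K/F,σ,a)`, whereas for `σ b ≠ b` an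
element `z` of `(K/F,σ,b)` with `(z t^{m-1}) t = z (t^{m-1} t)` already lies in `K`. Hence an
isomorphism `φ` restricts to an automorphism `τ = σ^j` of `K`; the relation `t x = σ(x) t` then
forces `φ(t) = k t`, so `φ(t^i) = (∏_{l<i} σ^l(k)) t^i`, and applying `φ` to `t^{m-1} t = a` gives
`σ^j(a) = N(k) b`. Conversely, if `σ^j(a) = N(k) b` then `x t^i ↦ σ^j(x) (∏_{l<i} σ^l(k)) t^i` is
an isomorphism. -/

section

variable {F K : Type*} [Field F] [Field K] [Algebra F K] {m : ℕ}

lemma Fin.val_one_of_one_lt [NeZero m] (hm : 1 < m) : ((1 : Fin m) : ℕ) = 1 := by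
  rw [Fin.val_one', Nat.mod_eq_of_lt hm]

lemma Fin.val_neg_one_of_one_lt [NeZero m] (hm : 1 < m) : ((-1 : Fin m) : ℕ) = m - 1 := by
  rw [Fin.val_neg, if_neg (Fin.ne_of_val_ne (by simp; omega)), Fin.val_one_of_one_lt hm]

section FinSum

variable {M : Type*} [AddCommMonoid M]

lemma Fin.sum_ite_val_add_eq (f : Fin m → M) (s r : Fin m) :
    (∑ i : Fin m, if (i : ℕ) + s = r then f i else 0) = if s ≤ r then f (r - s) else 0 := by
  have key (i : Fin m) : (i : ℕ) + s = r ↔ s ≤ r ∧ r - s = i := by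
    rw [Fin.ext_iff, Fin.le_def]
    constructor
    · intro h
      exact ⟨by omega, by rw [Fin.coe_sub_iff_le.mpr (by rw [Fin.le_def]; omega)]; omega⟩
    · rintro ⟨h, hi⟩
      rw [← hi, Fin.coe_sub_iff_le.mpr (Fin.le_def.mpr h)]
      omega
  simp_rw [key, ite_and]
  split_ifs <;> simp

lemma Fin.sum_ite_val_add_eq_add (f : Fin m → M) (s r : Fin m) :
    (∑ i : Fin m, if (i : ℕ) + s = r + m then f i else 0) = if s ≤ r then 0 else f (r - s) := by
  have key (i : Fin m) : (i : ℕ) + s = r + m ↔ r < s ∧ r - s = i := by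
    have := i.isLt
    have := r.isLt
    rw [Fin.ext_iff, Fin.lt_def]
    constructor
    · intro h
      exact ⟨by omega, by rw [Fin.coe_sub_iff_lt.mpr (by rw [Fin.lt_def]; omega)]; omega⟩
    · rintro ⟨h, hi⟩
      rw [← hi, Fin.coe_sub_iff_lt.mpr (Fin.lt_def.mpr h)]
      omega
  simp_rw [key, ite_and, ← not_le]
  split_ifs <;> simp

end FinSum

section CycMul

variable (σ : K ≃ₐ[F] K) (a : K)

lemma cycMul_single_right_apply (u : Fin m → K) (s : Fin m) (y : K) (r : Fin m) :
    cycMul m σ a u (Pi.single s y) r =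
      u (r - s) * (σ ^ ((r - s : Fin m) : ℕ)) y * if s ≤ r then 1 else (σ ^ (r : ℕ)) a := by
  -- `r - s` is subtraction modulo `m`; the product wraps around exactly when `r < s`.
  simp only [cycMul, Pi.single_apply, apply_ite, map_zero, mul_zero, ite_mul, zero_mul,
    ← ite_and]
  simp only [and_comm (b := _ = s)]
  simp only [ite_and, sum_ite_eq', mem_univ, if_true]
  rw [Fin.sum_ite_val_add_eq (fun i => u i * (σ ^ (i : ℕ)) y),
    Fin.sum_ite_val_add_eq_add (fun i => u i * (σ ^ (i : ℕ)) y * (σ ^ (r : ℕ)) a)]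
  split_ifs <;> simp

lemma cycMul_single_left_apply (s : Fin m) (y : K) (v : Fin m → K) (r : Fin m) :
    cycMul m σ a (Pi.single s y) v r =
      y * (σ ^ (s : ℕ)) (v (r - s)) * if s ≤ r then 1 else (σ ^ (r : ℕ)) a := by
  simp only [cycMul, Pi.single_apply, ite_mul, zero_mul]
  rw [sum_comm, sum_comm (γ := Fin m)
    (f := fun i j => if (i : ℕ) + _ = _ + m then _ else _)]
  simp only [← ite_and, and_comm (b := _ = s)]
  simp only [ite_and, sum_ite_eq', mem_univ, if_true, add_comm (s : ℕ)]
  rw [Fin.sum_ite_val_add_eq (fun j => y * (σ ^ (s : ℕ)) (v j)),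
    Fin.sum_ite_val_add_eq_add (fun j => y * (σ ^ (s : ℕ)) (v j) * (σ ^ (r : ℕ)) a)]
  split_ifs <;> simp

lemma cycMul_smul_left (x : K) (u v : Fin m → K) :
    cycMul m σ a (x • u) v = x • cycMul m σ a u v := by
  ext r
  simp only [cycMul, Pi.smul_apply, smul_eq_mul, mul_sum, mul_ite, mul_add, mul_zero,
    mul_assoc]

variable [NeZero m]

lemma cycMul_single_single (i j : Fin m) (x y : K) :
    cycMul m σ a (Pi.single i x) (Pi.single j y) =
      Pi.single (i + j)
        (x * (σ ^ (i : ℕ)) y * if (i : ℕ) + j < m then 1 else (σ ^ ((i + j : Fin m) : ℕ)) a) := by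
  ext r
  rw [cycMul_single_right_apply]
  by_cases hr : r = i + j
  · subst hr
    have hle : j ≤ i + j ↔ (i : ℕ) + j < m := by
      rw [Fin.le_def, Fin.val_add_eq_ite]
      split_ifs <;> omega
    simp [hle]
  · have : r - j ≠ i := fun h => hr (by rw [← h, sub_add_cancel])
    simp [hr, this]

lemma cycMul_single_single_one (hm : 1 < m) (i : Fin m) (hi : (i : ℕ) + 1 < m) (x y : K) :
    cycMul m σ a (Pi.single i x) (Pi.single 1 y) = Pi.single (i + 1) (x * (σ ^ (i : ℕ)) y) := by
  rw [cycMul_single_single, Fin.val_one_of_one_lt hm, if_pos hi, mul_one]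

lemma cycEmb_eq_single (x : K) : cycEmb K m x = Pi.single 0 x := by
  ext i
  simp only [cycEmb, Pi.single_apply, Fin.ext_iff, Fin.val_zero]

lemma cycOne_eq_single : cycOne K m = Pi.single 0 1 :=
  cycEmb_eq_single 1

@[simp]
lemma cycEmb_apply_zero (x : K) : cycEmb K m x 0 = x := by
  simp [cycEmb]

lemma cycMul_single_neg_one_single_one (hm : 1 < m) (x y : K) :
    cycMul m σ a (Pi.single (-1) x) (Pi.single 1 y) = cycEmb K m (x * (σ ^ (m - 1)) y * a) := by
  rw [cycMul_single_single, neg_add_cancel, cycEmb_eq_single, Fin.val_neg_one_of_one_lt hm,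
    Fin.val_one_of_one_lt hm, if_neg (by omega)]
  simp

lemma cycMul_cycEmb_cycEmb (x y : K) :
    cycMul m σ a (cycEmb K m x) (cycEmb K m y) = cycEmb K m (x * y) := by
  simp [cycEmb_eq_single, cycMul_single_single, Nat.pos_of_neZero]

lemma cycMul_cycEmb_left (x : K) (v : Fin m → K) : cycMul m σ a (cycEmb K m x) v = x • v := by
  ext r
  simp [cycEmb_eq_single, cycMul_single_left_apply]

lemma cycMul_cycEmb_right_apply (u : Fin m → K) (x : K) (r : Fin m) :
    cycMul m σ a u (cycEmb K m x) r = u r * (σ ^ (r : ℕ)) x := by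
  simp [cycEmb_eq_single, cycMul_single_right_apply]

lemma cycMul_cycEmb_assoc (x : K) (u v : Fin m → K) :
    cycMul m σ a (cycMul m σ a (cycEmb K m x) u) v =
      cycMul m σ a (cycEmb K m x) (cycMul m σ a u v) := by
  rw [cycMul_cycEmb_left, cycMul_cycEmb_left, cycMul_smul_left]

lemma cycMul_single_one_cycEmb (hm : 1 < m) (x : K) :
    cycMul m σ a (Pi.single 1 1) (cycEmb K m x) =
      cycMul m σ a (cycEmb K m (σ x)) (Pi.single 1 1) := by
  ext r
  rw [cycMul_cycEmb_right_apply, cycMul_cycEmb_left]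
  by_cases hr : r = 1
  · simp [hr, Nat.mod_eq_of_lt hm]
  · simp [hr]

lemma eq_cycEmb_of_cycMul_assoc (hm : 1 < m) (hσa : σ a ≠ a) (z : Fin m → K)
    (h : cycMul m σ a (cycMul m σ a z (Pi.single (-1) 1)) (Pi.single 1 1) =
      cycMul m σ a z (cycMul m σ a (Pi.single (-1) 1) (Pi.single 1 1))) :
    z = cycEmb K m (z 0) := by
  have h1 := Fin.val_one_of_one_lt hm
  -- Away from `0`, the `r`-th coordinates of the two sides are `z r * σ^(r-1) a` and `z r * σ^r a`.
  ext r
  by_cases hr : r = 0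
  · simp [hr]
  have hr1 : 1 ≤ r := by
    rw [Fin.le_def, h1]
    exact Nat.one_le_iff_ne_zero.mpr (by rwa [Fin.ext_iff, Fin.val_zero] at hr)
  have hsub : ((r - 1 : Fin m) : ℕ) + 1 = r := by
    rw [Fin.coe_sub_iff_le.mpr hr1, h1]
    omega
  have hlt : ¬ (-1 : Fin m) ≤ r - 1 := by
    rw [Fin.le_def, Fin.val_neg_one_of_one_lt hm]
    have := r.isLt
    omega
  have key := congrFun h r
  rw [cycMul_single_right_apply, cycMul_single_right_apply,
    cycMul_single_neg_one_single_one σ a hm, cycMul_cycEmb_right_apply, if_pos hr1, if_neg hlt,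
    sub_neg_eq_add, sub_add_cancel] at key
  simp only [map_one, mul_one, one_mul] at key
  have hpow : (σ ^ (r : ℕ)) a = (σ ^ ((r - 1 : Fin m) : ℕ)) (σ a) := by
    rw [← AlgEquiv.mul_apply, ← pow_succ, hsub]
  rw [hpow] at key
  have : z r = 0 := by
    by_contra hz
    exact hσa ((σ ^ ((r - 1 : Fin m) : ℕ)).injective (mul_left_cancel₀ hz key)).symm
  simp [this, cycEmb, hr]

end CycMul

section Norm

variable (σ : K ≃ₐ[F] K)

lemma prod_range_add_pow_apply (k : K) (i j : ℕ) :
    ∏ l ∈ range (i + j), (σ ^ l) k =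
      (∏ l ∈ range i, (σ ^ l) k) * (σ ^ i) (∏ l ∈ range j, (σ ^ l) k) := by
  simp only [prod_range_add, map_prod, ← AlgEquiv.mul_apply, ← pow_add]

variable {σ}

lemma prod_range_add_pow_apply_of_pow_eq_one (hσm : σ ^ m = 1) (k : K) (r : ℕ) :
    ∏ l ∈ range (r + m), (σ ^ l) k = cycNorm m σ k * ∏ l ∈ range r, (σ ^ l) k := by
  rw [add_comm, prod_range_add_pow_apply, hσm, AlgEquiv.one_apply, cycNorm]

lemma apply_cycNorm_of_pow_eq_one (hσm : σ ^ m = 1) (k : K) :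
    σ (cycNorm m σ k) = cycNorm m σ k := by
  cases m with
  | zero => simp [cycNorm]
  | succ n =>
    rw [cycNorm, map_prod, prod_range_succ, ← AlgEquiv.mul_apply, ← pow_succ', hσm,
      AlgEquiv.one_apply, prod_range_succ' _ n]
    simp only [← AlgEquiv.mul_apply, ← pow_succ', pow_zero, AlgEquiv.one_apply]

lemma pow_apply_cycNorm_of_pow_eq_one (hσm : σ ^ m = 1) (k : K) (n : ℕ) :
    (σ ^ n) (cycNorm m σ k) = cycNorm m σ k := by
  induction n with
  | zero => rfl
  | succ n ih => rw [pow_succ, AlgEquiv.mul_apply, apply_cycNorm_of_pow_eq_one hσm, ih]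

end Norm

section Iso

variable {σ : K ≃ₐ[F] K} {a b : K}

lemma cycH_cycMul {τ : K ≃ₐ[F] K} (hτ : Commute τ σ) (hσm : σ ^ m = 1) {k : K}
    (hab : τ a = cycNorm m σ k * b) (u v : Fin m → K) :
    cycH m σ τ k (cycMul m σ a u v) = cycMul m σ b (cycH m σ τ k u) (cycH m σ τ k v) := by
  have hτσ (i : ℕ) (x : K) : τ ((σ ^ i) x) = (σ ^ i) (τ x) := by
    rw [← AlgEquiv.mul_apply, (hτ.pow_right i).eq, AlgEquiv.mul_apply]
  ext r
  simp only [cycH, cycMul, map_add, add_mul, map_sum, sum_mul]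
  congr 1 <;> refine sum_congr rfl fun i _ => sum_congr rfl fun j _ => ?_ <;> split_ifs with hij
  · rw [map_mul, map_mul, hτσ, ← hij, prod_range_add_pow_apply]
    ring
  · simp
  · rw [map_mul, map_mul, map_mul, hτσ, hτσ, hab, map_mul, pow_apply_cycNorm_of_pow_eq_one hσm]
    have hP := prod_range_add_pow_apply σ k i j
    rw [hij, prod_range_add_pow_apply_of_pow_eq_one hσm] at hP
    linear_combination (τ (u i) * (σ ^ (i : ℕ)) (τ (v j)) * (σ ^ (r : ℕ)) b) * hP
  · simp

lemma isCycIso_cycH {τ : K ≃ₐ[F] K} (hτ : Commute τ σ) (hσm : σ ^ m = 1) {k : K}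
    (hk : k ≠ 0) (hab : τ a = cycNorm m σ k * b) : IsCycIso m σ a b (cycH m σ τ k) := by
  refine ⟨Function.Bijective.piMap fun i => (mulRight_bijective₀ _ ?_).comp τ.bijective,
    fun u v => ?_, fun c u => ?_, ?_, cycH_cycMul hτ hσm hab⟩
  · exact prod_ne_zero_iff.mpr fun l _ => (map_ne_zero _).mpr hk
  · ext i
    simp [cycH, add_mul]
  · ext i
    simp [cycH]
  · ext i
    by_cases hi : (i : ℕ) = 0 <;> simp [cycH, cycOne, hi]

variable {φ : (Fin m → K) → (Fin m → K)}

lemma IsCycIso.map_zero (hφ : IsCycIso m σ a b φ) : φ 0 = 0 := by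
  simpa using hφ.2.1 0 0

variable [NeZero m]

lemma IsCycIso.exists_algHom_cycEmb (hm : 1 < m) (hσb : σ b ≠ b) (hφ : IsCycIso m σ a b φ) :
    ∃ τ : K →ₐ[F] K, ∀ x, φ (cycEmb K m x) = cycEmb K m (τ x) := by
  obtain ⟨⟨-, hsurj⟩, hadd, hsmul, hone, hmul⟩ := hφ
  have hemb (x : K) : φ (cycEmb K m x) = cycEmb K m (φ (cycEmb K m x) 0) := by
    refine eq_cycEmb_of_cycMul_assoc σ b hm hσb _ ?_
    obtain ⟨u, hu⟩ := hsurj (Pi.single (-1) 1)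
    obtain ⟨v, hv⟩ := hsurj (Pi.single 1 1)
    rw [← hu, ← hv, ← hmul, ← hmul, ← hmul, ← hmul, cycMul_cycEmb_assoc]
  let φL : (Fin m → K) →ₗ[F] (Fin m → K) := { toFun := φ, map_add' := hadd, map_smul' := hsmul }
  let τL : K →ₗ[F] K := LinearMap.proj 0 ∘ₗ φL ∘ₗ LinearMap.single F (fun _ => K) 0
  have hτL (x : K) : τL x = φ (cycEmb K m x) 0 := by simp [τL, φL, cycEmb_eq_single]
  refine ⟨AlgHom.ofLinearMap τL ?_ fun x y => ?_, fun x => by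
    rw [AlgHom.ofLinearMap_apply, hτL, ← hemb]⟩
  · rw [hτL, show cycEmb K m 1 = cycOne K m from rfl, hone]
    exact cycEmb_apply_zero (1 : K)
  · rw [hτL, hτL, hτL, ← cycMul_cycEmb_cycEmb σ a, hmul, hemb x, hemb y, cycMul_cycEmb_cycEmb]
    simp only [cycEmb_apply_zero]

lemma IsCycIso.exists_map_single_one (hm : 1 < m) (hφ : IsCycIso m σ a b φ)
    {τ : K ≃ₐ[F] K} (hτσ : Commute τ σ) (hτ : ∀ x, φ (cycEmb K m x) = cycEmb K m (τ x))
    (hσ : ∀ i : Fin m, σ ^ (i : ℕ) = σ → i = 1) :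
    ∃ k ≠ 0, φ (Pi.single 1 1) = Pi.single 1 k := by
  have hφ0 := hφ.map_zero
  obtain ⟨⟨hinj, -⟩, -, -, -, hmul⟩ := hφ
  have hcoord (i : Fin m) (hi : φ (Pi.single 1 1) i ≠ 0) : i = 1 := by
    refine hσ i (AlgEquiv.ext fun y => ?_)
    obtain ⟨x, rfl⟩ := τ.surjective y
    have h := congrFun (congrArg φ (cycMul_single_one_cycEmb σ a hm x)) i
    rw [hmul, hmul, hτ, hτ, cycMul_cycEmb_right_apply, cycMul_cycEmb_left, Pi.smul_apply,
      smul_eq_mul, mul_comm, ← AlgEquiv.mul_apply τ σ, hτσ.eq, AlgEquiv.mul_apply] at h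
    exact mul_right_cancel₀ hi h
  have hsingle : φ (Pi.single 1 1) = Pi.single 1 (φ (Pi.single 1 1) 1) := by
    ext i
    by_cases hi : i = 1
    · simp [hi]
    · rw [Pi.single_eq_of_ne hi]
      exact not_not.mp (mt (hcoord i) hi)
  refine ⟨_, fun h0 => ?_, hsingle⟩
  rw [h0, Pi.single_zero, ← hφ0] at hsingle
  simpa using congrFun (hinj hsingle) 1

lemma IsCycIso.map_single_one_eq_prod (hm : 1 < m) (hφ : IsCycIso m σ a b φ) {k : K}
    (hk : φ (Pi.single 1 1) = Pi.single 1 k) (i : Fin m) :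
    φ (Pi.single i 1) = Pi.single i (∏ l ∈ range i, (σ ^ l) k) := by
  obtain ⟨-, -, -, hone, hmul⟩ := hφ
  obtain ⟨n, hn⟩ := i
  induction n with
  | zero =>
    rw [show (⟨0, hn⟩ : Fin m) = 0 from Fin.ext (Fin.val_zero m).symm, ← cycOne_eq_single,
      hone, Fin.val_zero, prod_range_zero, cycOne_eq_single]
  | succ n ih =>
    have hsucc : (⟨n + 1, hn⟩ : Fin m) = ⟨n, by omega⟩ + 1 :=
      Fin.ext (by rw [Fin.val_add, Fin.val_one_of_one_lt hm, Nat.mod_eq_of_lt hn])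
    have ht := cycMul_single_single_one σ a hm ⟨n, by omega⟩ hn 1 1
    rw [map_one, mul_one] at ht
    rw [hsucc, ← ht, hmul, ih, hk, cycMul_single_single_one σ b hm _ hn, ← hsucc,
      prod_range_succ]

lemma IsCycIso.apply_eq_cycNorm_mul (hm : 1 < m) (hφ : IsCycIso m σ a b φ)
    {τ : K ≃ₐ[F] K} (hτ : ∀ x, φ (cycEmb K m x) = cycEmb K m (τ x)) {k : K}
    (hk : φ (Pi.single 1 1) = Pi.single 1 k) : τ a = cycNorm m σ k * b := by
  have h := congrArg φ (cycMul_single_neg_one_single_one σ a hm 1 1)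
  rw [hφ.2.2.2.2, hφ.map_single_one_eq_prod hm hk, hk, cycMul_single_neg_one_single_one σ b hm,
    map_one, mul_one, one_mul, hτ, Fin.val_neg_one_of_one_lt hm, ← prod_range_succ,
    Nat.sub_add_cancel hm.le] at h
  simpa [cycNorm] using (congrFun h 0).symm

end Iso

end

lemma AlgEquiv.apply_ne_self_of_notMem_range {F K : Type*} [Field F] [Field K] [Algebra F K]
    [IsGalois F K] [FiniteDimensional F K] {σ : K ≃ₐ[F] K}
    (hgen : ∀ τ : K ≃ₐ[F] K, τ ∈ Subgroup.zpowers σ) {b : K}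
    (hb : b ∉ Set.range (algebraMap F K)) : σ b ≠ b := by
  intro hσb
  refine hb ((IsGalois.mem_range_algebraMap_iff_fixed b).mpr fun τ => ?_)
  have hσ : σ ∈ MulAction.stabilizer (K ≃ₐ[F] K) b := hσb
  exact Subgroup.zpowers_le.mpr hσ (hgen τ)

theorem stmt10_general {F K : Type*} [Field F] [Field K] [Algebra F K]
    (m : ℕ) (hm : 2 ≤ m) [IsGalois F K] [FiniteDimensional F K]
    (hrank : Module.finrank F K = m)
    (σ : K ≃ₐ[F] K) (hgen : ∀ τ : K ≃ₐ[F] K, τ ∈ Subgroup.zpowers σ)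
    (a b : K) (hb : b ∉ Set.range (algebraMap F K)) :
    (∃ φ : (Fin m → K) → (Fin m → K), IsCycIso m σ a b φ) ↔
      ∃ j < m, ∃ k : K, k ≠ 0 ∧ (σ ^ j) a = cycNorm m σ k * b := by
  have : NeZero m := ⟨by omega⟩
  have horder : orderOf σ = m := by
    rw [orderOf_eq_card_of_forall_mem_zpowers hgen, IsGalois.card_aut_eq_finrank, hrank]
  constructor
  · rintro ⟨φ, hφ⟩
    obtain ⟨τ, hτ⟩ := hφ.exists_algHom_cycEmb hm (AlgEquiv.apply_ne_self_of_notMem_range hgen hb)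
    obtain ⟨j, hj, hστ⟩ : ∃ j < m, σ ^ j = AlgEquiv.ofBijective τ τ.bijective := by
      classical
      simpa [horder] using mem_zpowers_iff_mem_range_orderOf.mp (hgen (.ofBijective τ τ.bijective))
    have hσj : ∀ x, φ (cycEmb K m x) = cycEmb K m ((σ ^ j) x) := by
      simpa [hστ] using hτ
    have hσ (i : Fin m) (hi : σ ^ (i : ℕ) = σ) : i = 1 := by
      have := pow_injOn_Iio_orderOf (by simp [horder]) (by simp [horder]; omega)
        (show σ ^ (i : ℕ) = σ ^ 1 by rwa [pow_one])
      exact Fin.ext (by rw [this, Fin.val_one_of_one_lt hm])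
    obtain ⟨k, hk0, hk⟩ := hφ.exists_map_single_one hm ((Commute.refl σ).pow_left j) hσj hσ
    exact ⟨j, hj, k, hk0, hφ.apply_eq_cycNorm_mul hm hσj hk⟩
  · rintro ⟨j, -, k, hk, hab⟩
    exact ⟨_, isCycIso_cycH ((Commute.refl σ).pow_left j) (horder ▸ pow_orderOf_eq_one σ) hk hab⟩

/-- For `a, b ∈ K∖F`, the nonassociative cyclic algebras `(K/F,σ,a)` and
`(K/F,σ,b)` are isomorphic as `F`-algebras if and only if there exist `j ∈ {0,…,m−1}` and
`k ∈ K^×` such that `σ^j(a) = N_{K/F}(k)·b`. -/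
theorem stmt10 {F K : Type*} [Field F] [Field K] [Algebra F K]
    (m : ℕ) (hm : 2 ≤ m) [IsGalois F K] [FiniteDimensional F K]
    (hrank : Module.finrank F K = m)
    (σ : K ≃ₐ[F] K) (hgen : ∀ τ : K ≃ₐ[F] K, τ ∈ Subgroup.zpowers σ)
    (a b : K) (ha : a ∉ Set.range (algebraMap F K)) (hb : b ∉ Set.range (algebraMap F K)) :
    (∃ φ : (Fin m → K) → (Fin m → K), IsCycIso m σ a b φ) ↔
      ∃ j < m, ∃ k : K, k ≠ 0 ∧ (σ ^ j) a = cycNorm m σ k * b :=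
  stmt10_general m hm hrank σ hgen a b hb
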